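/- Let L ⊂ A = ℝ⟨x,y⟩ be the free Lie algebra on x, y (the smallest Lie subalgebra of A under [a,b] = ab − ba containing x and y). Define ∂_x^L : L → A by ∂_x^L(l) = (id ⊗ ε)(∂_x(l)), where ε : A → ℝ picks out the constant term. Then ∂_x^L satisfies the Leibniz-type identity ∂_x^L([l,m]) = l·∂_x^L(m) − m·∂_x^L(l) for all l, m ∈ L. -/

import Mathlib

noncomputable section
open TensorProduct

abbrev A : Type := FreeAlgebra ℝ (Fin 2)
abbrev B : Type := A ⊗[ℝ] A

def X : A := FreeAlgebra.ι ℝ 0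
def Y : A := FreeAlgebra.ι ℝ 1

/-- Generator matrices used to define the noncommutative partial derivative `pd d`. -/
def genMat (d i : Fin 2) : Matrix (Fin 2) (Fin 2) B :=
  !![(Algebra.TensorProduct.includeLeft : A →ₐ[ℝ] B) (FreeAlgebra.ι ℝ i), if i = d then 1 else 0;
     0, Algebra.TensorProduct.includeRight (FreeAlgebra.ι ℝ i)]

def Φmat (d : Fin 2) : A →ₐ[ℝ] Matrix (Fin 2) (Fin 2) B :=
  FreeAlgebra.lift ℝ (genMat d)

/-- The noncommutative partial derivative `∂_x` (for `d = 0`) resp. `∂_y` (for `d = 1`):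
on a monomial it splits the word at each occurrence of the letter `d`. -/
def pd (d : Fin 2) (a : A) : B := Φmat d a 0 1

/-- The counit `ε : A → ℝ`, picking out the constant term (`x, y ↦ 0`). -/
def εR : A →ₐ[ℝ] ℝ := FreeAlgebra.lift ℝ (fun _ => (0 : ℝ))

/-- The Lie partial derivative `∂^L = (id ⊗ ε) ∘ ∂ : A → A`. -/
def pdL (d : Fin 2) (a : A) : A :=
  TensorProduct.rid ℝ A (LinearMap.lTensor A εR.toLinearMap (pd d a))

attribute [local instance 100] LieRing.ofAssociativeRing

/-- The free Lie algebra `L ⊂ A`: the smallest Lie subalgebra of `A` (with bracket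
`[a,b] = ab − ba`) containing `x` and `y`. -/
def L : LieSubalgebra ℝ A := LieSubalgebra.lieSpan ℝ A {X, Y}

/-! The upper triangular representation `Φmat d` has `a ⊗ 1` and `1 ⊗ a` on its diagonal, so its
corner entry `∂` satisfies `∂(ab) = (a ⊗ 1) ∂b + ∂a (1 ⊗ b)`. Applying `id ⊗ ε` gives
`∂^L(ab) = a ∂^L(b) + ε(b) ∂^L(a)`, and `ε` vanishes on `L`, being a Lie algebra map to the abelian
`ℝ` that kills `x` and `y`; so the `ε`-terms of `∂^L(lm - ml)` drop out. -/

lemma Φmat_triangular (d : Fin 2) (a : A) :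
    Φmat d a 0 0 = a ⊗ₜ 1 ∧ Φmat d a 1 0 = 0 ∧ Φmat d a 1 1 = 1 ⊗ₜ a := by
  induction a using FreeAlgebra.induction with
  | grade0 r =>
      simp [Algebra.algebraMap_eq_smul_one, TensorProduct.smul_tmul, Algebra.TensorProduct.one_def]
  | grade1 i => simp [Φmat, genMat]
  | mul a b ha hb =>
      simp [Matrix.mul_apply, Fin.sum_univ_two, ha.1, ha.2.1, ha.2.2, hb.1, hb.2.1, hb.2.2]
  | add a b ha hb =>
      simp [Matrix.add_apply, ha.1, ha.2.1, ha.2.2, hb.1, hb.2.1, hb.2.2, TensorProduct.add_tmul,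
        TensorProduct.tmul_add]

lemma pd_mul (d : Fin 2) (a b : A) : pd d (a * b) = (a ⊗ₜ 1) * pd d b + pd d a * (1 ⊗ₜ b) := by
  simp only [pd, map_mul, Matrix.mul_apply, Fin.sum_univ_two, (Φmat_triangular d a).1,
    (Φmat_triangular d b).2.2]

lemma pd_sub (d : Fin 2) (a b : A) : pd d (a - b) = pd d a - pd d b := by
  simp only [pd, map_sub, Matrix.sub_apply]

def counitRight : B →ₐ[ℝ] A :=
  (Algebra.TensorProduct.rid ℝ ℝ A).toAlgHom.comp (Algebra.TensorProduct.map (AlgHom.id ℝ A) εR)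

lemma counitRight_tmul (a b : A) : counitRight (a ⊗ₜ b) = εR b • a := by
  simp [counitRight]

lemma pdL_eq_counitRight (d : Fin 2) (a : A) : pdL d a = counitRight (pd d a) := rfl

lemma pdL_mul (d : Fin 2) (a b : A) : pdL d (a * b) = a * pdL d b + εR b • pdL d a := by
  simp [pdL_eq_counitRight, pd_mul, counitRight_tmul]

lemma pdL_sub (d : Fin 2) (a b : A) : pdL d (a - b) = pdL d a - pdL d b := by
  simp only [pdL_eq_counitRight, pd_sub, map_sub]

lemma εR_eq_zero_of_mem_L {a : A} (ha : a ∈ L) : εR a = 0 := by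
  suffices L ≤ (εR.toLieHom.ker : LieSubalgebra ℝ A) from LieHom.mem_ker.mp (this ha)
  rw [L, LieSubalgebra.lieSpan_le]
  rintro a (rfl | rfl) <;> simp [X, Y, εR]

/-- Leibniz-type identity for `∂_x^L` on the free Lie algebra:
`∂_x^L([l,m]) = l·∂_x^L(m) − m·∂_x^L(l)`. -/
theorem pdL_leibniz (l m : A) (hl : l ∈ L) (hm : m ∈ L) :
    pdL 0 (l * m - m * l) = l * pdL 0 m - m * pdL 0 l := by
  rw [pdL_sub, pdL_mul, pdL_mul, εR_eq_zero_of_mem_L hl, εR_eq_zero_of_mem_L hm, zero_smul,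
    zero_smul, add_zero, add_zero]
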